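/- arXiv:0912.3589 — 3 statements merged into one kernel-verified Lean document; each statement's English description precedes it below -/
import Mathlib

section
/- Let φ = (φ_x, φ_y, φ_z) ∈ ℝ³ be a unit vector with φ_z ≠ 0 and let r > 0. Then the matrix C(φ, r) := (r²/4)·[[1 − φ_x², −φ_x φ_y], [−φ_x φ_y, 1 − φ_y²]] is symmetric positive definite, and the image of Circle(φ, r) under the orthogonal projection P along the z-axis equals the solid ellipse E(0, C(φ, r)). -/
/-!
Write `v = (φ_x, φ_y)`. A point `x` of the plane `φ⊥` is determined by its shadow `p = P x`,
because `x_z = -(v ⬝ p) / φ_z`, and since `φ_z² = 1 - ‖v‖²`,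
`‖x‖² = ‖p‖² + (v ⬝ p)² / (1 - ‖v‖²) = pᵀ (I - v vᵀ)⁻¹ p` (Sherman–Morrison).
So the shadow of the disk of radius `r` is `{p | pᵀ (I - v vᵀ)⁻¹ p ≤ r²}`, which is
`E(0, (r² / 4) (I - v vᵀ))`; and `I - v vᵀ` is positive definite because `‖v‖ < 1`.
-/

open Matrix

/-- `I - v vᵀ` for `v = (a, b)`; the matrix `C(φ, r)` is `(r² / 4) • shadowMatrix (φ 0) (φ 1)`. -/
def shadowMatrix (a b : ℝ) : Matrix (Fin 2) (Fin 2) ℝ :=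
  !![1 - a ^ 2, -(a * b); -(a * b), 1 - b ^ 2]

lemma dotProduct_shadowMatrix_mulVec (a b : ℝ) (p : Fin 2 → ℝ) :
    p ⬝ᵥ shadowMatrix a b *ᵥ p =
      (1 - a ^ 2 - b ^ 2) * (p 0 ^ 2 + p 1 ^ 2) + (b * p 0 - a * p 1) ^ 2 := by
  simp only [dotProduct, mulVec, shadowMatrix, of_apply, cons_val', cons_val_fin_one,
    Fin.sum_univ_two, cons_val_zero, cons_val_one]
  ring

lemma shadowMatrix_posDef {a b : ℝ} (h : a ^ 2 + b ^ 2 < 1) : (shadowMatrix a b).PosDef := by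
  refine posDef_iff_dotProduct_mulVec.mpr ⟨?_, fun p hp => ?_⟩
  · ext i j
    fin_cases i <;> fin_cases j <;> simp [shadowMatrix]
  · have hp_sq : 0 < p 0 ^ 2 + p 1 ^ 2 := by
      contrapose! hp
      ext i
      fin_cases i <;> simp only [Fin.zero_eta, Fin.mk_one, Pi.zero_apply] <;> nlinarith [sq_nonneg (p 0), sq_nonneg (p 1)]
    rw [star_trivial, dotProduct_shadowMatrix_mulVec]
    nlinarith [sq_nonneg (b * p 0 - a * p 1), mul_pos (sub_pos.mpr h) hp_sq]

lemma dotProduct_inv_shadowMatrix_mulVec {a b : ℝ} (h : a ^ 2 + b ^ 2 ≠ 1) (p : Fin 2 → ℝ) :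
    p ⬝ᵥ (shadowMatrix a b)⁻¹ *ᵥ p =
      p 0 ^ 2 + p 1 ^ 2 + (a * p 0 + b * p 1) ^ 2 / (1 - a ^ 2 - b ^ 2) := by
  have hdet_ne : 1 - a ^ 2 - b ^ 2 ≠ 0 := by contrapose! h; linarith
  have hdet : (1 - a ^ 2) * (1 - b ^ 2) - -(a * b) * -(a * b) = 1 - a ^ 2 - b ^ 2 := by ring
  rw [inv_def, shadowMatrix, det_fin_two_of, hdet, adjugate_fin_two_of, Ring.inverse_eq_inv']
  simp only [dotProduct, mulVec, neg_neg, Matrix.smul_apply, of_apply, cons_val',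
    cons_val_fin_one, smul_eq_mul, Fin.sum_univ_two, cons_val_zero, cons_val_one]
  field_simp
  ring

section

variable {φ : Fin 3 → ℝ}

lemma sq_add_sq_add_sq_eq_one (hunit : φ ⬝ᵥ φ = 1) : φ 0 ^ 2 + φ 1 ^ 2 + φ 2 ^ 2 = 1 := by
  simpa [dotProduct, Fin.sum_univ_three, sq] using hunit

noncomputable def liftToPlane (φ : Fin 3 → ℝ) (p : Fin 2 → ℝ) : Fin 3 → ℝ :=
  ![p 0, p 1, -(φ 0 * p 0 + φ 1 * p 1) / φ 2]

lemma liftToPlane_dotProduct (hz : φ 2 ≠ 0) (p : Fin 2 → ℝ) : liftToPlane φ p ⬝ᵥ φ = 0 := by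
  simp only [dotProduct, liftToPlane, Fin.sum_univ_three, cons_val_zero, cons_val_one, cons_val]
  field_simp
  ring

lemma proj_liftToPlane (p : Fin 2 → ℝ) : ![liftToPlane φ p 0, liftToPlane φ p 1] = p := by
  ext i
  fin_cases i <;> rfl

lemma liftToPlane_proj_of_dotProduct_eq_zero (hz : φ 2 ≠ 0) {x : Fin 3 → ℝ}
    (hx : x ⬝ᵥ φ = 0) : liftToPlane φ ![x 0, x 1] = x := by
  have hx2 : x 2 = -(φ 0 * x 0 + φ 1 * x 1) / φ 2 := by
    simp only [dotProduct, Fin.sum_univ_three] at hx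
    field_simp
    linarith
  ext i
  fin_cases i <;> simp [liftToPlane, hx2]

lemma dotProduct_self_liftToPlane (hunit : φ ⬝ᵥ φ = 1) (hz : φ 2 ≠ 0) (p : Fin 2 → ℝ) :
    liftToPlane φ p ⬝ᵥ liftToPlane φ p = p ⬝ᵥ (shadowMatrix (φ 0) (φ 1))⁻¹ *ᵥ p := by
  have hφ := sq_add_sq_add_sq_eq_one hunit
  have hφz : 1 - φ 0 ^ 2 - φ 1 ^ 2 = φ 2 ^ 2 := by linarith
  rw [dotProduct_inv_shadowMatrix_mulVec (by nlinarith [sq_pos_of_ne_zero hz]), hφz]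
  simp only [dotProduct, liftToPlane, Fin.sum_univ_three, cons_val_zero, cons_val_one, cons_val]
  field_simp

lemma image_proj_plane_disk (hunit : φ ⬝ᵥ φ = 1) (hz : φ 2 ≠ 0) (ρ : ℝ) :
    (fun x : Fin 3 → ℝ => (![x 0, x 1] : Fin 2 → ℝ)) '' {x | x ⬝ᵥ x ≤ ρ ∧ x ⬝ᵥ φ = 0} =
      {p | p ⬝ᵥ (shadowMatrix (φ 0) (φ 1))⁻¹ *ᵥ p ≤ ρ} := by
  ext p
  constructor
  · rintro ⟨x, ⟨hxρ, hxφ⟩, rfl⟩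
    rwa [Set.mem_ofPred_eq, ← dotProduct_self_liftToPlane hunit hz,
      liftToPlane_proj_of_dotProduct_eq_zero hz hxφ]
  · intro hp
    refine ⟨liftToPlane φ p, ⟨?_, liftToPlane_dotProduct hz p⟩, proj_liftToPlane p⟩
    rwa [dotProduct_self_liftToPlane hunit hz]

end

/-- For a unit vector φ ∈ ℝ³ with φ_z ≠ 0 and r > 0, the matrix
C(φ,r) = (r²/4)·[[1 − φx², −φxφy], [−φxφy, 1 − φy²]] is symmetric positive
definite, and the image of the solid circle Circle(φ,r) = {x : ‖x‖ ≤ r, x·φ = 0}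
under the orthogonal projection (x,y,z) ↦ (x,y) equals the solid ellipse
E(0, C) = {p : pᵀ C⁻¹ p ≤ 4}. -/
theorem proj_circle_eq_ellipse
    (φ : Fin 3 → ℝ) (hunit : φ ⬝ᵥ φ = 1) (hz : φ 2 ≠ 0) (r : ℝ) (hr : 0 < r)
    (C : Matrix (Fin 2) (Fin 2) ℝ)
    (hC : C = (r ^ 2 / 4) •
      !![1 - φ 0 ^ 2, -(φ 0 * φ 1); -(φ 0 * φ 1), 1 - φ 1 ^ 2]) :
    C.IsSymm ∧ C.PosDef ∧
    (fun x : Fin 3 → ℝ => (![x 0, x 1] : Fin 2 → ℝ)) ''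
        {x : Fin 3 → ℝ | Real.sqrt (x ⬝ᵥ x) ≤ r ∧ x ⬝ᵥ φ = 0} =
      {p : Fin 2 → ℝ | (p - 0) ⬝ᵥ C⁻¹ *ᵥ (p - 0) ≤ 4} := by
  change C = (r ^ 2 / 4) • shadowMatrix (φ 0) (φ 1) at hC
  have hφ := sq_add_sq_add_sq_eq_one hunit
  have hM : (shadowMatrix (φ 0) (φ 1)).PosDef :=
    shadowMatrix_posDef (by nlinarith [sq_pos_of_ne_zero hz])
  have hk : 0 < r ^ 2 / 4 := by positivity
  have hCpos : C.PosDef := hC ▸ hM.smul hk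
  refine ⟨isHermitian_iff_isSymm.mp hCpos.isHermitian, hCpos, ?_⟩
  have hCinv : C⁻¹ = (r ^ 2 / 4)⁻¹ • (shadowMatrix (φ 0) (φ 1))⁻¹ := by
    have := invertibleOfNonzero hk.ne'
    rw [hC, inv_smul _ _ hM.det_pos.ne'.isUnit, invOf_eq_inv]
  simp_rw [Real.sqrt_le_left hr.le, image_proj_plane_disk hunit hz, sub_zero, hCinv,
    smul_mulVec, dotProduct_smul, smul_eq_mul]
  ext p
  rw [Set.mem_ofPred_eq, Set.mem_ofPred_eq, inv_mul_le_iff₀ hk, div_mul_cancel₀ _ four_ne_zero]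
end

section
/- Let C ∈ ℝ^{2×2} be symmetric positive definite with eigenvalues λ₁ > λ₂ > 0, and set a₁ := 2√λ₁. Then (i) for any unit vector ψ ∈ ℝ³ with ψ_z ≠ 0 and any r > 0, the equality C = (r²/4)·[[1 − ψ_x², −ψ_x ψ_y], [−ψ_x ψ_y, 1 − ψ_y²]] forces r = a₁; and (ii) there are exactly two unit vectors ψ ∈ ℝ³ with ψ_z < 0 satisfying C = (a₁²/4)·[[1 − ψ_x², −ψ_x ψ_y], [−ψ_x ψ_y, 1 − ψ_y²]], and they are related by (ψ_x, ψ_y, ψ_z) ↦ (−ψ_x, −ψ_y, ψ_z). -/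
/-!
Writing `v = (ψ_x, ψ_y)`, the matrix `projCov ψ = 1 - v vᵀ` has eigenvalues `1` and
`1 - ‖v‖² = ψ_z²`, so `C = u • projCov ψ` has trace `u (1 + ψ_z²)` and determinant `u² ψ_z²`.
Comparing with `λ₁ + λ₂` and `λ₁ λ₂` gives `(u - λ₁)(u - λ₂) = 0`, and `u = λ₂` would force
`ψ_z² = λ₁ / λ₂ > 1`; hence `u = λ₁`. Then `v vᵀ = 1 - C / λ₁` is a positive semidefinite matrix
of rank one, which determines `v` up to sign, while `ψ_z = -√(λ₂ / λ₁)` is fixed by `ψ_z < 0`.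
-/

open Matrix

theorem Matrix.mem_spectrum_fin_two_iff {K : Type*} [Field K] (A : Matrix (Fin 2) (Fin 2) K)
    (l : K) : l ∈ spectrum K A ↔ l ^ 2 - A.trace * l + A.det = 0 := by
  simp [mem_spectrum_iff_isRoot_charpoly, charpoly_fin_two]

theorem Matrix.trace_eq_add_and_det_eq_mul_of_spectrum_eq_pair {K : Type*} [Field K]
    {A : Matrix (Fin 2) (Fin 2) K} {l₁ l₂ : K} (h : spectrum K A = {l₁, l₂}) (hne : l₁ ≠ l₂) :
    A.trace = l₁ + l₂ ∧ A.det = l₁ * l₂ := by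
  have root₁ := (A.mem_spectrum_fin_two_iff l₁).mp (by simp [h])
  have root₂ := (A.mem_spectrum_fin_two_iff l₂).mp (by simp [h])
  have htr : A.trace = l₁ + l₂ := by
    have : (l₁ - l₂) * (l₁ + l₂ - A.trace) = 0 := by linear_combination root₁ - root₂
    linear_combination -(mul_eq_zero.mp this).resolve_left (sub_ne_zero.mpr hne)
  exact ⟨htr, by linear_combination root₁ + l₁ * htr⟩

theorem nonneg_and_nonneg_of_add_nonneg_of_mul_nonneg {α : Type*} [CommRing α] [LinearOrder α]
    [IsStrictOrderedRing α] {a b : α} (hsum : 0 ≤ a + b) (hmul : 0 ≤ a * b) :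
    0 ≤ a ∧ 0 ≤ b := by
  constructor <;> nlinarith

theorem Real.exists_sq_eq_sq_eq_mul_eq {α β γ : ℝ} (hα : 0 ≤ α) (hβ : 0 ≤ β)
    (h : α * β = γ ^ 2) : ∃ x y : ℝ, x ^ 2 = α ∧ y ^ 2 = β ∧ x * y = γ := by
  rcases le_or_gt 0 γ with hγ | hγ
  · exact ⟨√α, √β, Real.sq_sqrt hα, Real.sq_sqrt hβ, by
      rw [← Real.sqrt_mul hα, h, Real.sqrt_sq hγ]⟩
  · exact ⟨√α, -√β, Real.sq_sqrt hα, by rw [neg_sq, Real.sq_sqrt hβ], by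
      rw [mul_neg, ← Real.sqrt_mul hα, h, Real.sqrt_sq_eq_abs, abs_of_neg hγ, neg_neg]⟩

theorem eq_and_eq_or_eq_neg_and_eq_neg_of_sq_eq_sq_of_mul_eq {R : Type*} [CommRing R]
    [NoZeroDivisors R] {x y x' y' : R} (hx : x' ^ 2 = x ^ 2) (hy : y' ^ 2 = y ^ 2)
    (hxy : x' * y' = x * y) : x' = x ∧ y' = y ∨ x' = -x ∧ y' = -y := by
  rcases sq_eq_sq_iff_eq_or_eq_neg.mp hx with rfl | rfl <;>
    rcases sq_eq_sq_iff_eq_or_eq_neg.mp hy with rfl | rfl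
  · exact .inl ⟨rfl, rfl⟩
  · have : x' * (y + y) = 0 := by linear_combination -hxy
    rcases mul_eq_zero.mp this with h | h
    · exact .inr ⟨by simp [h], rfl⟩
    · exact .inl ⟨rfl, by linear_combination -h⟩
  · have : (x + x) * y' = 0 := by linear_combination -hxy
    rcases mul_eq_zero.mp this with h | h
    · exact .inl ⟨by linear_combination -h, rfl⟩
    · exact .inr ⟨rfl, by simp [h]⟩
  · exact .inr ⟨rfl, rfl⟩

theorem dotProduct_self_fin_three {R : Type*} [CommSemiring R] (ψ : Fin 3 → R) :
    ψ ⬝ᵥ ψ = ψ 0 ^ 2 + ψ 1 ^ 2 + ψ 2 ^ 2 := by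
  simp [dotProduct, Fin.sum_univ_three, sq]

theorem dotProduct_self_neg_neg (ψ : Fin 3 → ℝ) :
    ![-ψ 0, -ψ 1, ψ 2] ⬝ᵥ ![-ψ 0, -ψ 1, ψ 2] = ψ ⬝ᵥ ψ := by
  simp only [dotProduct_self_fin_three, cons_val, neg_sq]

/-- Up to the factor `r² / 4`, the covariance matrix of the orthographic projection onto the
`xy`-plane of a circle of radius `r` with unit normal `ψ`. -/
def projCov (ψ : Fin 3 → ℝ) : Matrix (Fin 2) (Fin 2) ℝ :=
  !![1 - ψ 0 ^ 2, -(ψ 0 * ψ 1); -(ψ 0 * ψ 1), 1 - ψ 1 ^ 2]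

theorem trace_projCov (ψ : Fin 3 → ℝ) : (projCov ψ).trace = 2 - ψ 0 ^ 2 - ψ 1 ^ 2 := by
  rw [projCov, trace_fin_two_of]; ring

theorem det_projCov (ψ : Fin 3 → ℝ) : (projCov ψ).det = 1 - ψ 0 ^ 2 - ψ 1 ^ 2 := by
  rw [projCov, det_fin_two_of]; ring

theorem projCov_neg_neg (ψ : Fin 3 → ℝ) : projCov ![-ψ 0, -ψ 1, ψ 2] = projCov ψ := by
  simp only [projCov, cons_val_zero, cons_val_one, neg_sq, neg_mul_neg]

theorem eq_projCov_iff {D : Matrix (Fin 2) (Fin 2) ℝ} (hD : D.IsSymm) (ψ : Fin 3 → ℝ) :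
    D = projCov ψ ↔ ψ 0 ^ 2 = 1 - D 0 0 ∧ ψ 1 ^ 2 = 1 - D 1 1 ∧ ψ 0 * ψ 1 = -D 0 1 := by
  rw [← Matrix.ext_iff, Fin.forall_fin_two, Fin.forall_fin_two, Fin.forall_fin_two,
    hD.apply 0 1]
  simp only [projCov, of_apply, cons_val', cons_val_zero, cons_val_one, cons_val_fin_one]
  grind

theorem ne_neg_neg_of_det_projCov_ne_one {ψ : Fin 3 → ℝ} (h : (projCov ψ).det ≠ 1) :
    ψ ≠ ![-ψ 0, -ψ 1, ψ 2] := by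
  intro hψ
  have h₀ : ψ 0 = -ψ 0 := congrFun hψ 0
  have h₁ : ψ 1 = -ψ 1 := congrFun hψ 1
  apply h
  rw [det_projCov, show ψ 0 = 0 by linarith, show ψ 1 = 0 by linarith]
  ring

theorem eq_of_eq_smul_projCov {C : Matrix (Fin 2) (Fin 2) ℝ} {l₁ l₂ u : ℝ}
    (htr : C.trace = l₁ + l₂) (hdet : C.det = l₁ * l₂) (h12 : l₂ < l₁) (h2 : 0 < l₂)
    {ψ : Fin 3 → ℝ} (hC : C = u • projCov ψ) : u = l₁ := by
  rw [hC, trace_smul, trace_projCov, smul_eq_mul] at htr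
  rw [hC, det_smul, det_projCov, Fintype.card_fin] at hdet
  have hroots : (u - l₁) * (u - l₂) = 0 := by linear_combination u * htr - hdet
  refine sub_eq_zero.mp ((mul_eq_zero.mp hroots).resolve_right fun hu => ?_)
  rw [sub_eq_zero.mp hu] at hdet
  nlinarith [sq_nonneg (ψ 0), sq_nonneg (ψ 1)]

theorem exists_projCov_eq {D : Matrix (Fin 2) (Fin 2) ℝ} (hD : D.IsSymm) {t : ℝ}
    (htr : D.trace = 1 + t) (hdet : D.det = t) (ht₀ : 0 < t) (ht₁ : t ≤ 1) :
    ∃ ψ : Fin 3 → ℝ, ψ ⬝ᵥ ψ = 1 ∧ ψ 2 < 0 ∧ D = projCov ψ := by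
  rw [trace_fin_two] at htr
  rw [det_fin_two, hD.apply 0 1] at hdet
  have hprod : (1 - D 0 0) * (1 - D 1 1) = (-D 0 1) ^ 2 := by linear_combination hdet - htr
  obtain ⟨hα, hβ⟩ := nonneg_and_nonneg_of_add_nonneg_of_mul_nonneg (by linarith)
    (hprod ▸ sq_nonneg _)
  obtain ⟨x, y, hx, hy, hxy⟩ := Real.exists_sq_eq_sq_eq_mul_eq hα hβ hprod
  refine ⟨![x, y, -√t], ?_, by simpa using ht₀, (eq_projCov_iff hD _).mpr ⟨hx, hy, hxy⟩⟩
  rw [dotProduct_self_fin_three]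
  simp only [cons_val, neg_sq, Real.sq_sqrt ht₀.le]
  linarith

theorem eq_or_eq_neg_neg_of_projCov_eq {ψ χ : Fin 3 → ℝ} (hψ : ψ ⬝ᵥ ψ = 1)
    (hχ : χ ⬝ᵥ χ = 1) (hψ₂ : ψ 2 < 0) (hχ₂ : χ 2 < 0) (h : projCov χ = projCov ψ) :
    χ = ψ ∨ χ = ![-ψ 0, -ψ 1, ψ 2] := by
  rw [dotProduct_self_fin_three] at hψ hχ
  have h₀₀ := congrFun₂ h 0 0
  have h₀₁ := congrFun₂ h 0 1
  have h₁₁ := congrFun₂ h 1 1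
  simp only [projCov, of_apply, cons_val', cons_val_zero, cons_val_one, cons_val_fin_one,
    sub_right_inj, neg_inj] at h₀₀ h₀₁ h₁₁
  have hz : χ 2 = ψ 2 := by nlinarith
  rcases eq_and_eq_or_eq_neg_and_eq_neg_of_sq_eq_sq_of_mul_eq h₀₀ h₁₁ h₀₁ with
    ⟨hx, hy⟩ | ⟨hx, hy⟩
  · left; ext i; fin_cases i <;> simp [hx, hy, hz]
  · right; ext i; fin_cases i <;> simp [hx, hy, hz]

theorem two_fold_normal_ambiguity_general
    (C : Matrix (Fin 2) (Fin 2) ℝ) (hsym : C.IsSymm)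
    (l₁ l₂ : ℝ) (hspec : spectrum ℝ C = {l₁, l₂}) (h12 : l₂ < l₁) (h2 : 0 < l₂)
    (a₁ : ℝ) (ha₁ : a₁ = 2 * Real.sqrt l₁) :
    (∀ (ψ : Fin 3 → ℝ) (r : ℝ), ψ ⬝ᵥ ψ = 1 → ψ 2 ≠ 0 → 0 < r →
      C = (r ^ 2 / 4) •
        !![1 - ψ 0 ^ 2, -(ψ 0 * ψ 1); -(ψ 0 * ψ 1), 1 - ψ 1 ^ 2] → r = a₁) ∧
    (∃ ψ ψ' : Fin 3 → ℝ, ψ' = ![-ψ 0, -ψ 1, ψ 2] ∧ ψ ≠ ψ' ∧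
      (ψ ⬝ᵥ ψ = 1 ∧ ψ 2 < 0 ∧
        C = (a₁ ^ 2 / 4) •
          !![1 - ψ 0 ^ 2, -(ψ 0 * ψ 1); -(ψ 0 * ψ 1), 1 - ψ 1 ^ 2]) ∧
      (ψ' ⬝ᵥ ψ' = 1 ∧ ψ' 2 < 0 ∧
        C = (a₁ ^ 2 / 4) •
          !![1 - ψ' 0 ^ 2, -(ψ' 0 * ψ' 1); -(ψ' 0 * ψ' 1), 1 - ψ' 1 ^ 2]) ∧
      ∀ χ : Fin 3 → ℝ, χ ⬝ᵥ χ = 1 → χ 2 < 0 →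
        C = (a₁ ^ 2 / 4) •
          !![1 - χ 0 ^ 2, -(χ 0 * χ 1); -(χ 0 * χ 1), 1 - χ 1 ^ 2] →
        χ = ψ ∨ χ = ψ') := by
  obtain ⟨htr, hdet⟩ := trace_eq_add_and_det_eq_mul_of_spectrum_eq_pair hspec h12.ne'
  have hl₁ : 0 < l₁ := h2.trans h12
  have hscale : a₁ ^ 2 / 4 = l₁ := by rw [ha₁, mul_pow, Real.sq_sqrt hl₁.le]; ring
  refine ⟨fun ψ r _ _ hr hC => ?_, ?_⟩
  · have hr₁ : r ^ 2 / 4 = l₁ := eq_of_eq_smul_projCov htr hdet h12 h2 hC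
    exact (pow_left_inj₀ hr.le (by rw [ha₁]; positivity) two_ne_zero).mp (by linarith)
  have hnorm : ∀ ψ, C = l₁ • projCov ψ ↔ l₁⁻¹ • C = projCov ψ := fun ψ =>
    (inv_smul_eq_iff₀ hl₁.ne').symm
  have htr' : (l₁⁻¹ • C).trace = 1 + l₂ / l₁ := by
    rw [trace_smul, htr, smul_eq_mul]; field_simp
  have hdet' : (l₁⁻¹ • C).det = l₂ / l₁ := by
    rw [det_smul, hdet, Fintype.card_fin]; field_simp
  obtain ⟨ψ, hψ, hψ₂, hCψ⟩ := exists_projCov_eq (hsym.smul _) htr' hdet' (div_pos h2 hl₁)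
    ((div_le_one hl₁).mpr h12.le)
  rw [hscale]
  refine ⟨ψ, _, rfl, ne_neg_neg_of_det_projCov_ne_one ?_, ⟨hψ, hψ₂, (hnorm ψ).mpr hCψ⟩,
    ⟨(dotProduct_self_neg_neg ψ).trans hψ, hψ₂, ?_⟩, fun χ hχ hχ₂ hCχ => ?_⟩
  · rw [← hCψ, hdet']
    exact ((div_lt_one hl₁).mpr h12).ne
  · exact (hnorm _).mpr (hCψ.trans (projCov_neg_neg ψ).symm)
  · exact eq_or_eq_neg_neg_of_projCov_eq hψ hχ hψ₂ hχ₂ (((hnorm χ).mp hCχ).symm.trans hCψ)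

/-- Let C be symmetric positive definite with eigenvalues
λ₁ > λ₂ > 0 and a₁ := 2√λ₁. Then (i) any representation
C = (r²/4)·[[1 − ψx², −ψxψy], [−ψxψy, 1 − ψy²]] with ψ a unit vector, ψ_z ≠ 0
and r > 0 forces r = a₁; and (ii) there are exactly two unit vectors ψ with
ψ_z < 0 satisfying C = (a₁²/4)·[[1 − ψx², −ψxψy], [−ψxψy, 1 − ψy²]], and they
are related by (ψx, ψy, ψz) ↦ (−ψx, −ψy, ψz). -/
theorem two_fold_normal_ambiguity
    (C : Matrix (Fin 2) (Fin 2) ℝ) (hsym : C.IsSymm) (hpd : C.PosDef)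
    (l₁ l₂ : ℝ) (hspec : spectrum ℝ C = {l₁, l₂}) (h12 : l₂ < l₁) (h2 : 0 < l₂)
    (a₁ : ℝ) (ha₁ : a₁ = 2 * Real.sqrt l₁) :
    (∀ (ψ : Fin 3 → ℝ) (r : ℝ), ψ ⬝ᵥ ψ = 1 → ψ 2 ≠ 0 → 0 < r →
      C = (r ^ 2 / 4) •
        !![1 - ψ 0 ^ 2, -(ψ 0 * ψ 1); -(ψ 0 * ψ 1), 1 - ψ 1 ^ 2] → r = a₁) ∧
    (∃ ψ ψ' : Fin 3 → ℝ, ψ' = ![-ψ 0, -ψ 1, ψ 2] ∧ ψ ≠ ψ' ∧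
      (ψ ⬝ᵥ ψ = 1 ∧ ψ 2 < 0 ∧
        C = (a₁ ^ 2 / 4) •
          !![1 - ψ 0 ^ 2, -(ψ 0 * ψ 1); -(ψ 0 * ψ 1), 1 - ψ 1 ^ 2]) ∧
      (ψ' ⬝ᵥ ψ' = 1 ∧ ψ' 2 < 0 ∧
        C = (a₁ ^ 2 / 4) •
          !![1 - ψ' 0 ^ 2, -(ψ' 0 * ψ' 1); -(ψ' 0 * ψ' 1), 1 - ψ' 1 ^ 2]) ∧
      ∀ χ : Fin 3 → ℝ, χ ⬝ᵥ χ = 1 → χ 2 < 0 →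
        C = (a₁ ^ 2 / 4) •
          !![1 - χ 0 ^ 2, -(χ 0 * χ 1); -(χ 0 * χ 1), 1 - χ 1 ^ 2] →
        χ = ψ ∨ χ = ψ') :=
  two_fold_normal_ambiguity_general C hsym l₁ l₂ hspec h12 h2 a₁ ha₁
end

section
/- Let R > 0, ν ∈ ℝ³, and let φ ∈ ℝ³ be a unit vector. Let C ∈ ℝ^{2×2} be symmetric positive definite with largest eigenvalue λ₁, set a₁ := 2√λ₁, and let μ ∈ ℝ². Suppose ψ ∈ ℝ³ is a unit vector with ψ_z ≠ 0 such that C = (a₁²/4)·[[1 − ψ_x², −ψ_x ψ_y], [−ψ_x ψ_y, 1 − ψ_y²]]. Let Q̃ ∈ ℝ^{3×3} be an orthogonal matrix with Q̃·φ = ψ, let Q ∈ ℝ^{2×3} consist of the first two rows of Q̃, and set σ := a₁/R and q := μ − σ·Q·ν. Then the affine map x ↦ σ·Q·x + q maps the solid circle Circle(ν, φ, R) := {x ∈ ℝ³ : ‖x − ν‖ ≤ R and (x − ν)·φ = 0} onto the solid ellipse E(μ, C) := {p ∈ ℝ² : (p − μ)ᵀ C⁻¹ (p − μ) ≤ 4}.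 -/
/-!
Rotating by `Qf` carries the circle onto the disk of radius `R` centred at `0` in the plane
`ψ⊥`, and `Q` then keeps the first two coordinates, which is a bijection `ψ⊥ ≃ ℝ²` because
`ψ 2 ≠ 0`. For `w ⊥ ψ` the adjugate of the shape matrix `I - ψ'ψ'ᵀ` has quadratic form
`ψ 2 ^ 2 * ‖w‖²` at `(w 0, w 1)` and its determinant is `ψ 2 ^ 2`, so the ellipse inequality
at `σ • (w 0, w 1)` reads `4 ‖w‖² / R² ≤ 4`.
-/

open Matrix

theorem dotProduct_mulVec_mulVec_of_transpose_mul_self {n : Type*} [Fintype n] [DecidableEq n]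
    {A : Matrix n n ℝ} (hA : Aᵀ * A = 1) (u v : n → ℝ) :
    (A *ᵥ u) ⬝ᵥ (A *ᵥ v) = u ⬝ᵥ v := by
  rw [dotProduct_mulVec, ← mulVec_transpose, mulVec_mulVec, hA, one_mulVec]

theorem image_sub_mulVec_solidCircle {n : Type*} [Fintype n] [DecidableEq n]
    {A : Matrix n n ℝ} (hA : Aᵀ * A = 1) (ν φ : n → ℝ) (R : ℝ) :
    (fun x => A *ᵥ (x - ν)) ''
        {x | Real.sqrt ((x - ν) ⬝ᵥ (x - ν)) ≤ R ∧ (x - ν) ⬝ᵥ φ = 0} =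
      {w | Real.sqrt (w ⬝ᵥ w) ≤ R ∧ w ⬝ᵥ (A *ᵥ φ) = 0} := by
  have hA' : A * Aᵀ = 1 := mul_eq_one_comm.mp hA
  have hAt : Aᵀᵀ * Aᵀ = 1 := by rwa [transpose_transpose]
  rw [Set.image_eq_preimage_of_inverse (g := fun w => ν + Aᵀ *ᵥ w)
    (fun x => by simp [mulVec_mulVec, hA]) (fun w => by simp [mulVec_mulVec, hA'])]
  ext w
  simp only [Set.mem_preimage, Set.mem_ofPred_eq, add_sub_cancel_left,
    dotProduct_mulVec_mulVec_of_transpose_mul_self hAt]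
  rw [mulVec_transpose, dotProduct_mulVec]

theorem exists_init_eq_of_dotProduct_eq_zero {n : ℕ} {ψ : Fin (n + 1) → ℝ}
    (hψ : ψ (Fin.last n) ≠ 0) (v : Fin n → ℝ) :
    ∃ w : Fin (n + 1) → ℝ, w ⬝ᵥ ψ = 0 ∧ Fin.init w = v := by
  refine ⟨Fin.snoc v (-(v ⬝ᵥ Fin.init ψ) / ψ (Fin.last n)), ?_, Fin.init_snoc _ _⟩
  rw [dotProduct, Fin.sum_univ_castSucc]
  simp only [Fin.snoc_castSucc, Fin.snoc_last]
  rw [div_mul_cancel₀ _ hψ]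
  simp [dotProduct, Fin.init]

/-- `I - ψ'ψ'ᵀ` for `ψ' = (ψ 0, ψ 1)`: the shape matrix of the projection of the unit disk
orthogonal to `ψ` onto the first two coordinates. -/
def circleShadow (ψ : Fin 3 → ℝ) : Matrix (Fin 2) (Fin 2) ℝ :=
  !![1 - ψ 0 ^ 2, -(ψ 0 * ψ 1); -(ψ 0 * ψ 1), 1 - ψ 1 ^ 2]

theorem det_circleShadow {ψ : Fin 3 → ℝ} (hψ : ψ ⬝ᵥ ψ = 1) :
    (circleShadow ψ).det = ψ 2 ^ 2 := by
  rw [circleShadow, det_fin_two_of]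
  simp only [dotProduct, Fin.sum_univ_three] at hψ
  linear_combination (-1 : ℝ) * hψ

theorem init_dotProduct_adjugate_circleShadow_mulVec_init {ψ w : Fin 3 → ℝ}
    (hψ : ψ ⬝ᵥ ψ = 1) (hw : w ⬝ᵥ ψ = 0) :
    Fin.init w ⬝ᵥ (circleShadow ψ).adjugate *ᵥ Fin.init w = ψ 2 ^ 2 * (w ⬝ᵥ w) := by
  rw [circleShadow, adjugate_fin_two_of]
  simp only [dotProduct, Fin.sum_univ_three, Fin.sum_univ_two, mulVec, Fin.init, Fin.castSucc_zero,
    Fin.castSucc_one, of_apply, cons_val', cons_val_zero, cons_val_one, cons_val_fin_one,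
    neg_neg] at hψ hw ⊢
  linear_combination (-(w 0 ^ 2 + w 1 ^ 2)) * hψ + (w 0 * ψ 0 + w 1 * ψ 1 - w 2 * ψ 2) * hw

theorem init_dotProduct_smul_circleShadow_inv_mulVec_init {ψ w : Fin 3 → ℝ}
    (hψ : ψ ⬝ᵥ ψ = 1) (hψz : ψ 2 ≠ 0) (hw : w ⬝ᵥ ψ = 0) {c : ℝ} (hc : c ≠ 0) :
    Fin.init w ⬝ᵥ (c • circleShadow ψ)⁻¹ *ᵥ Fin.init w = (w ⬝ᵥ w) / c := by
  rw [inv_def, det_smul, adjugate_smul, det_circleShadow hψ, Ring.inverse_eq_inv',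
    smul_mulVec, smul_mulVec, dotProduct_smul, dotProduct_smul,
    init_dotProduct_adjugate_circleShadow_mulVec_init hψ hw]
  simp only [Fintype.card_fin, smul_eq_mul, Nat.add_one_sub_one, pow_one]
  field_simp

theorem image_init_solidDisk_eq_ellipse {ψ : Fin 3 → ℝ} (hψ : ψ ⬝ᵥ ψ = 1) (hψz : ψ 2 ≠ 0)
    {a R : ℝ} (ha : a ≠ 0) (hR : 0 < R) (μ : Fin 2 → ℝ) :
    (fun w : Fin 3 → ℝ => μ + (a / R) • Fin.init w) ''
        {w | Real.sqrt (w ⬝ᵥ w) ≤ R ∧ w ⬝ᵥ ψ = 0} =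
      {p | (p - μ) ⬝ᵥ ((a ^ 2 / 4) • circleShadow ψ)⁻¹ *ᵥ (p - μ) ≤ 4} := by
  have hform : ∀ w : Fin 3 → ℝ, w ⬝ᵥ ψ = 0 →
      ((a / R) • Fin.init w ⬝ᵥ ((a ^ 2 / 4) • circleShadow ψ)⁻¹ *ᵥ ((a / R) • Fin.init w) ≤ 4
        ↔ Real.sqrt (w ⬝ᵥ w) ≤ R) := by
    intro w hw
    rw [mulVec_smul, smul_dotProduct, dotProduct_smul,
      init_dotProduct_smul_circleShadow_inv_mulVec_init hψ hψz hw (by positivity),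
      smul_eq_mul, smul_eq_mul, Real.sqrt_le_left hR.le]
    have hscale : a / R * (a / R * (w ⬝ᵥ w / (a ^ 2 / 4))) = 4 * (w ⬝ᵥ w) / R ^ 2 := by
      field_simp
    rw [hscale, div_le_iff₀ (by positivity)]
    constructor <;> intro <;> linarith
  ext p
  constructor
  · rintro ⟨w, ⟨hwR, hw⟩, rfl⟩
    rw [Set.mem_ofPred_eq, add_sub_cancel_left, hform w hw]
    exact hwR
  · intro hp
    obtain ⟨w, hw, hinit⟩ := exists_init_eq_of_dotProduct_eq_zero hψz ((R / a) • (p - μ))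
    have hp' : μ + (a / R) • Fin.init w = p := by
      rw [hinit, smul_smul, div_mul_div_cancel₀ hR.ne', div_self ha, one_smul, add_sub_cancel]
    refine ⟨w, ⟨(hform w hw).1 ?_, hw⟩, hp'⟩
    rwa [← hp', Set.mem_ofPred_eq, add_sub_cancel_left] at hp

theorem one_wheel_alignment_general
    (R : ℝ) (hR : 0 < R) (ν φ : Fin 3 → ℝ)
    (C : Matrix (Fin 2) (Fin 2) ℝ) (hpd : C.PosDef)
    (a₁ : ℝ) (μ : Fin 2 → ℝ)
    (ψ : Fin 3 → ℝ) (hψ : ψ ⬝ᵥ ψ = 1) (hψz : ψ 2 ≠ 0)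
    (hCψ : C = (a₁ ^ 2 / 4) •
      !![1 - ψ 0 ^ 2, -(ψ 0 * ψ 1); -(ψ 0 * ψ 1), 1 - ψ 1 ^ 2])
    (Qf : Matrix (Fin 3) (Fin 3) ℝ) (hQf : Qfᵀ * Qf = 1) (hQfφ : Qf *ᵥ φ = ψ)
    (Q : Matrix (Fin 2) (Fin 3) ℝ) (hQ : Q = Qf.submatrix Fin.castSucc id)
    (σ : ℝ) (hσ : σ = a₁ / R) (q : Fin 2 → ℝ) (hq : q = μ - σ • (Q *ᵥ ν)) :
    (fun x : Fin 3 → ℝ => σ • (Q *ᵥ x) + q) ''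
        {x : Fin 3 → ℝ | Real.sqrt ((x - ν) ⬝ᵥ (x - ν)) ≤ R ∧ (x - ν) ⬝ᵥ φ = 0} =
      {p : Fin 2 → ℝ | (p - μ) ⬝ᵥ C⁻¹ *ᵥ (p - μ) ≤ 4} := by
  have ha₁ : a₁ ≠ 0 := by
    rintro rfl
    simpa [hCψ] using hpd.det_pos
  have hmap : (fun x => σ • (Q *ᵥ x) + q) =
      (fun w => μ + (a₁ / R) • Fin.init w) ∘ (fun x => Qf *ᵥ (x - ν)) := by
    funext x
    have hQx : ∀ y, Q *ᵥ y = Fin.init (Qf *ᵥ y) := fun y => by subst hQ; rfl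
    rw [Function.comp_apply, ← hQx, hq, hσ, mulVec_sub, smul_sub]
    abel
  rw [hmap, Set.image_comp, image_sub_mulVec_solidCircle hQf, hQfφ, hCψ]
  exact image_init_solidDisk_eq_ellipse hψ hψz ha₁ hR μ

/-- forward direction of the paper's Lemma 2, onewheelalign:
Let R > 0, ν ∈ ℝ³, φ ∈ ℝ³ a unit vector; C ∈ ℝ^{2×2} symmetric positive
definite with largest eigenvalue λ₁, a₁ := 2√λ₁, μ ∈ ℝ². Suppose ψ is a unit
vector with ψ_z ≠ 0 and C = (a₁²/4)·[[1 − ψx², −ψxψy], [−ψxψy, 1 − ψy²]].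
Let Qf be orthogonal with Qf·φ = ψ, Q its first two rows, σ := a₁/R and
q := μ − σ·Q·ν. Then x ↦ σ·Q·x + q maps the solid circle
Circle(ν, φ, R) = {x : ‖x − ν‖ ≤ R, (x − ν)·φ = 0} onto the solid ellipse
E(μ, C) = {p : (p − μ)ᵀ C⁻¹ (p − μ) ≤ 4}. -/
theorem one_wheel_alignment
    (R : ℝ) (hR : 0 < R) (ν φ : Fin 3 → ℝ) (hφ : φ ⬝ᵥ φ = 1)
    (C : Matrix (Fin 2) (Fin 2) ℝ) (hsym : C.IsSymm) (hpd : C.PosDef)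
    (l₁ : ℝ) (hl₁ : l₁ ∈ spectrum ℝ C) (hmax : ∀ l ∈ spectrum ℝ C, l ≤ l₁)
    (a₁ : ℝ) (ha₁ : a₁ = 2 * Real.sqrt l₁) (μ : Fin 2 → ℝ)
    (ψ : Fin 3 → ℝ) (hψ : ψ ⬝ᵥ ψ = 1) (hψz : ψ 2 ≠ 0)
    (hCψ : C = (a₁ ^ 2 / 4) •
      !![1 - ψ 0 ^ 2, -(ψ 0 * ψ 1); -(ψ 0 * ψ 1), 1 - ψ 1 ^ 2])
    (Qf : Matrix (Fin 3) (Fin 3) ℝ) (hQf : Qfᵀ * Qf = 1) (hQfφ : Qf *ᵥ φ = ψ)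
    (Q : Matrix (Fin 2) (Fin 3) ℝ) (hQ : Q = Qf.submatrix Fin.castSucc id)
    (σ : ℝ) (hσ : σ = a₁ / R) (q : Fin 2 → ℝ) (hq : q = μ - σ • (Q *ᵥ ν)) :
    (fun x : Fin 3 → ℝ => σ • (Q *ᵥ x) + q) ''
        {x : Fin 3 → ℝ | Real.sqrt ((x - ν) ⬝ᵥ (x - ν)) ≤ R ∧ (x - ν) ⬝ᵥ φ = 0} =
      {p : Fin 2 → ℝ | (p - μ) ⬝ᵥ C⁻¹ *ᵥ (p - μ) ≤ 4} :=
  one_wheel_alignment_general R hR ν φ C hpd a₁ μ ψ hψ hψz hCψ Qf hQf hQfφ Q hQ σ hσ q hq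
end
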